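/- Let w be a classical solution of the full damped inextensible cantilever system with p ≡ 0. Then for all t ∈ (0,T): (d/dt)[ ∫₀ᴸ w(x,t) w_t(x,t) dx + (k₂/2)‖w_xx(t)‖² + 2 ∫₀ᴸ u(x,t) u_t(x,t) dx ] = ‖w_t(t)‖² + 2‖u_t(t)‖² − D‖w_xx(t)‖² − 2D‖(w_x w_xx)(t)‖². -/

import Mathlib

/-!
Multiply the equation by `w` and integrate over `[0, L]`. With `w(0) = w_x(0) = 0` and
`w_xx(L) = w_xxx(L) = 0`, integration by parts turns `∫ w ∂ₓ⁴w` into `‖w_xx‖²`,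
`∫ w ∂ₓ⁴w_t` into `∫ w_xx w_xxt` (the boundary values of `∂ₓ²w_t`, `∂ₓ³w_t` at `L` vanish because
those of `w_xx`, `w_xxx` do for all times), and each of the two cubic terms into `±‖w_x w_xx‖²`.
For the nonlocal term, one integration by parts against `w` gives `-∫ w_x² G` with
`G = ∫ₓᴸ u_tt`, and since `u_x = -w_x²/2`, `u(0) = 0`, `G(L) = 0`, a second one against `u`
gives `2 ∫ u u_tt`. Differentiating the three functionals under the integral sign produces the
same integrals `∫ w w_tt`, `k₂ ∫ w_xx w_xxt`, `2 ∫ u u_tt`, plus `‖w_t‖² + 2‖u_t‖²`.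
-/

open MeasureTheory Set

/-- Spatial partial derivative of a function of `(x, t)`. -/
noncomputable def pdx (f : ℝ → ℝ → ℝ) : ℝ → ℝ → ℝ := fun x t => deriv (fun y => f y t) x

/-- Temporal partial derivative of a function of `(x, t)`. -/
noncomputable def pdt (f : ℝ → ℝ → ℝ) : ℝ → ℝ → ℝ := fun x t => deriv (fun s => f x s) t

/-- Axial displacement from the effective inextensibility constraint:
`u(x,t) = -(1/2)∫₀ˣ w_x(ξ,t)² dξ`. -/
noncomputable def uF (w : ℝ → ℝ → ℝ) : ℝ → ℝ → ℝ := fun x t =>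
  -(1/2) * ∫ ξ in (0:ℝ)..x, (pdx w ξ t) ^ 2

/-- `u_t(x,t) = -∫₀ˣ w_x w_xt dξ`. -/
noncomputable def utF (w : ℝ → ℝ → ℝ) : ℝ → ℝ → ℝ := fun x t =>
  -∫ ξ in (0:ℝ)..x, pdx w ξ t * pdt (pdx w) ξ t

/-- `u_tt(x,t) = -∫₀ˣ [w_xt² + w_x w_xtt] dξ`. -/
noncomputable def uttF (w : ℝ → ℝ → ℝ) : ℝ → ℝ → ℝ := fun x t =>
  -∫ ξ in (0:ℝ)..x, ((pdt (pdx w) ξ t) ^ 2 + pdx w ξ t * pdt (pdt (pdx w)) ξ t)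

/-- A classical solution of the full damped inextensible cantilever system on
`[0,L] × [0,T]` with forcing `p`: smooth on an open neighborhood of `[0,L] × [0,T]`,
satisfying the PDE
`w_tt + D ∂ₓ⁴w + k₂ ∂ₓ⁴w_t − D ∂ₓ(w_xx² w_x) + D ∂ₓ²(w_x² w_xx) + ∂ₓ(w_x ∫ₓᴸ u_tt dξ) = p`
pointwise and the clamped-free boundary conditions. -/
def IsFullSol (L D k2 T : ℝ) (p w : ℝ → ℝ → ℝ) : Prop :=
  (∃ U : Set (ℝ × ℝ), IsOpen U ∧ Icc (0:ℝ) L ×ˢ Icc (0:ℝ) T ⊆ U ∧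
      ContDiffOn ℝ (⊤ : ℕ∞) (fun q : ℝ × ℝ => w q.1 q.2) U) ∧
  (∀ x ∈ Icc (0:ℝ) L, ∀ t ∈ Icc (0:ℝ) T,
      pdt (pdt w) x t + D * pdx (pdx (pdx (pdx w))) x t
        + k2 * pdx (pdx (pdx (pdx (pdt w)))) x t
        - D * pdx (fun y s => (pdx (pdx w) y s) ^ 2 * pdx w y s) x t
        + D * pdx (pdx (fun y s => (pdx w y s) ^ 2 * pdx (pdx w) y s)) x t
        + pdx (fun y s => pdx w y s * ∫ ξ in y..L, uttF w ξ s) x t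
      = p x t) ∧
  (∀ t ∈ Icc (0:ℝ) T,
    w 0 t = 0 ∧ pdx w 0 t = 0 ∧ pdx (pdx w) L t = 0 ∧ pdx (pdx (pdx w)) L t = 0)

open Function Filter Topology
open scoped ContDiff

theorem IsOpen.exists_Icc_subset_of_Icc_subset {s : Set ℝ} {p q : ℝ} (hs : IsOpen s)
    (hpq : p ≤ q) (h : Icc p q ⊆ s) : ∃ a b, a < p ∧ q < b ∧ Icc a b ⊆ s := by
  obtain ⟨l, hl, hls⟩ := exists_Ioc_subset_of_mem_nhds (hs.mem_nhds (h (left_mem_Icc.2 hpq)))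
    (exists_lt p)
  obtain ⟨u, hu, hus⟩ := exists_Ico_subset_of_mem_nhds (hs.mem_nhds (h (right_mem_Icc.2 hpq)))
    (exists_gt q)
  refine ⟨(l + p) / 2, (q + u) / 2, by linarith, by linarith, fun x hx => ?_⟩
  rcases lt_or_ge x p with hxp | hpx
  · exact hls ⟨by linarith [hx.1], hxp.le⟩
  rcases le_or_gt x q with hxq | hqx
  · exact h ⟨hpx, hxq⟩
  · exact hus ⟨hqx.le, by linarith [hx.2]⟩

theorem ContinuousOn.uncurry_right_of_mapsTo {α β γ : Type*} [TopologicalSpace α]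
    [TopologicalSpace β] [TopologicalSpace γ] {f : α → β → γ} {U : Set (α × β)} {s : Set α}
    {b : β} (hf : ContinuousOn (uncurry f) U) (hs : MapsTo (·, b) s U) :
    ContinuousOn (f · b) s :=
  hf.comp (continuous_id.prodMk continuous_const).continuousOn hs

section PartialDerivatives

variable {U : Set (ℝ × ℝ)} {f g : ℝ → ℝ → ℝ} {x t : ℝ} {m n : WithTop ℕ∞}

theorem hasDerivAt_pdx_fderiv (hg : DifferentiableAt ℝ (uncurry g) (x, t)) :
    HasDerivAt (g · t) (fderiv ℝ (uncurry g) (x, t) (1, 0)) x :=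
  hg.hasFDerivAt.comp_hasDerivAt (x := x) (f := fun y : ℝ => (y, t))
    ((hasDerivAt_id x).prodMk (hasDerivAt_const x t))

theorem hasDerivAt_pdt_fderiv (hg : DifferentiableAt ℝ (uncurry g) (x, t)) :
    HasDerivAt (g x ·) (fderiv ℝ (uncurry g) (x, t) (0, 1)) t :=
  hg.hasFDerivAt.comp_hasDerivAt (x := t) (f := fun s : ℝ => (x, s))
    ((hasDerivAt_const t x).prodMk (hasDerivAt_id t))

theorem pdx_eq_fderiv (hg : DifferentiableAt ℝ (uncurry g) (x, t)) :
    pdx g x t = fderiv ℝ (uncurry g) (x, t) (1, 0) :=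
  (hasDerivAt_pdx_fderiv hg).deriv

theorem pdt_eq_fderiv (hg : DifferentiableAt ℝ (uncurry g) (x, t)) :
    pdt g x t = fderiv ℝ (uncurry g) (x, t) (0, 1) :=
  (hasDerivAt_pdt_fderiv hg).deriv

theorem ContDiffOn.hasDerivAt_pdx (hg : ContDiffOn ℝ n (uncurry g) U) (hU : IsOpen U)
    (hn : n ≠ 0) (hq : (x, t) ∈ U) : HasDerivAt (g · t) (pdx g x t) x :=
  (hasDerivAt_pdx_fderiv ((hg.differentiableOn hn).differentiableAt
    (hU.mem_nhds hq))).differentiableAt.hasDerivAt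

theorem ContDiffOn.hasDerivAt_pdt (hg : ContDiffOn ℝ n (uncurry g) U) (hU : IsOpen U)
    (hn : n ≠ 0) (hq : (x, t) ∈ U) : HasDerivAt (g x ·) (pdt g x t) t :=
  (hasDerivAt_pdt_fderiv ((hg.differentiableOn hn).differentiableAt
    (hU.mem_nhds hq))).differentiableAt.hasDerivAt

theorem ContDiffOn.uncurry_pdx (hg : ContDiffOn ℝ n (uncurry g) U) (hU : IsOpen U)
    (hmn : m + 1 ≤ n) : ContDiffOn ℝ m (uncurry (pdx g)) U :=
  ((hg.fderiv_of_isOpen hU hmn).clm_apply (contDiffOn_const (c := ((1 : ℝ), (0 : ℝ))))).congr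
    fun _ hq => pdx_eq_fderiv ((hg.differentiableOn
      (zero_lt_one.trans_le (le_add_self.trans hmn)).ne').differentiableAt (hU.mem_nhds hq))

theorem ContDiffOn.uncurry_pdt (hg : ContDiffOn ℝ n (uncurry g) U) (hU : IsOpen U)
    (hmn : m + 1 ≤ n) : ContDiffOn ℝ m (uncurry (pdt g)) U :=
  ((hg.fderiv_of_isOpen hU hmn).clm_apply (contDiffOn_const (c := ((0 : ℝ), (1 : ℝ))))).congr
    fun _ hq => pdt_eq_fderiv ((hg.differentiableOn
      (zero_lt_one.trans_le (le_add_self.trans hmn)).ne').differentiableAt (hU.mem_nhds hq))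

theorem ContDiffOn.uncurry_pdx_infty (hg : ContDiffOn ℝ ∞ (uncurry g) U) (hU : IsOpen U) :
    ContDiffOn ℝ ∞ (uncurry (pdx g)) U :=
  hg.uncurry_pdx hU le_rfl

theorem ContDiffOn.uncurry_pdt_infty (hg : ContDiffOn ℝ ∞ (uncurry g) U) (hU : IsOpen U) :
    ContDiffOn ℝ ∞ (uncurry (pdt g)) U :=
  hg.uncurry_pdt hU le_rfl

theorem uncurry_pdx_eventuallyEq (hg : ContDiffOn ℝ n (uncurry g) U) (hU : IsOpen U)
    (hn : n ≠ 0) {q : ℝ × ℝ} (hq : q ∈ U) :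
    uncurry (pdx g) =ᶠ[𝓝 q] fun p => fderiv ℝ (uncurry g) p (1, 0) := by
  filter_upwards [hU.mem_nhds hq] with p hp
  exact pdx_eq_fderiv ((hg.differentiableOn hn).differentiableAt (hU.mem_nhds hp))

theorem uncurry_pdt_eventuallyEq (hg : ContDiffOn ℝ n (uncurry g) U) (hU : IsOpen U)
    (hn : n ≠ 0) {q : ℝ × ℝ} (hq : q ∈ U) :
    uncurry (pdt g) =ᶠ[𝓝 q] fun p => fderiv ℝ (uncurry g) p (0, 1) := by
  filter_upwards [hU.mem_nhds hq] with p hp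
  exact pdt_eq_fderiv ((hg.differentiableOn hn).differentiableAt (hU.mem_nhds hp))

theorem pdt_pdx_eq_fderiv_fderiv (hg : ContDiffOn ℝ n (uncurry g) U) (hU : IsOpen U)
    (hn : 2 ≤ n) (hq : (x, t) ∈ U) :
    pdt (pdx g) x t = fderiv ℝ (fderiv ℝ (uncurry g)) (x, t) (0, 1) (1, 0) := by
  have hd : DifferentiableAt ℝ (fderiv ℝ (uncurry g)) (x, t) :=
    ((hg.fderiv_of_isOpen hU (m := 1) hn).differentiableOn one_ne_zero).differentiableAt
      (hU.mem_nhds hq)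
  rw [pdt_eq_fderiv (((hg.uncurry_pdx hU (m := 1) hn).differentiableOn
      one_ne_zero).differentiableAt (hU.mem_nhds hq)),
    (uncurry_pdx_eventuallyEq hg hU (zero_lt_two.trans_le hn).ne' hq).fderiv_eq,
    fderiv_clm_apply hd (differentiableAt_const _)]
  simp

theorem pdx_pdt_eq_fderiv_fderiv (hg : ContDiffOn ℝ n (uncurry g) U) (hU : IsOpen U)
    (hn : 2 ≤ n) (hq : (x, t) ∈ U) :
    pdx (pdt g) x t = fderiv ℝ (fderiv ℝ (uncurry g)) (x, t) (1, 0) (0, 1) := by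
  have hd : DifferentiableAt ℝ (fderiv ℝ (uncurry g)) (x, t) :=
    ((hg.fderiv_of_isOpen hU (m := 1) hn).differentiableOn one_ne_zero).differentiableAt
      (hU.mem_nhds hq)
  rw [pdx_eq_fderiv (((hg.uncurry_pdt hU (m := 1) hn).differentiableOn
      one_ne_zero).differentiableAt (hU.mem_nhds hq)),
    (uncurry_pdt_eventuallyEq hg hU (zero_lt_two.trans_le hn).ne' hq).fderiv_eq,
    fderiv_clm_apply hd (differentiableAt_const _)]
  simp

theorem eqOn_pdx_pdt (hg : ContDiffOn ℝ n (uncurry g) U) (hU : IsOpen U) (hn : 2 ≤ n) :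
    EqOn (uncurry (pdx (pdt g))) (uncurry (pdt (pdx g))) U := fun _ hq => by
  rw [uncurry_apply_pair, uncurry_apply_pair, pdt_pdx_eq_fderiv_fderiv hg hU hn hq,
    pdx_pdt_eq_fderiv_fderiv hg hU hn hq,
    (hg.contDiffAt (hU.mem_nhds hq)).isSymmSndFDerivAt (by simpa using hn)]

theorem Set.EqOn.uncurry_pdx (hfg : EqOn (uncurry f) (uncurry g) U) (hU : IsOpen U) :
    EqOn (uncurry (pdx f)) (uncurry (pdx g)) U := fun _ hq =>
  Filter.EventuallyEq.deriv_eq <| Filter.mem_of_superset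
    ((continuous_id.prodMk continuous_const).continuousAt.preimage_mem_nhds (hU.mem_nhds hq))
    fun _ hy => hfg hy

theorem pdt_eq_zero_of_eventually (h : ∀ᶠ s in 𝓝 t, g x s = 0) : pdt g x t = 0 :=
  (Filter.EventuallyEq.deriv_eq h).trans (deriv_const t 0)

end PartialDerivatives

section ParametricIntegrals

variable {a b c d t : ℝ}

theorem hasDerivAt_intervalIntegral_of_continuousOn {F F' : ℝ → ℝ → ℝ}
    (hF : ContinuousOn (uncurry F) (uIcc a b ×ˢ Icc c d))
    (hF' : ContinuousOn (uncurry F') (uIcc a b ×ˢ Icc c d))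
    (hFF' : ∀ x ∈ uIcc a b, ∀ s ∈ Ioo c d, HasDerivAt (F x ·) (F' x s) s) (ht : t ∈ Ioo c d) :
    HasDerivAt (fun s => ∫ x in a..b, F x s) (∫ x in a..b, F' x t) t := by
  obtain ⟨C, hC⟩ := (isCompact_uIcc.prod isCompact_Icc).exists_bound_of_continuousOn hF'
  have hnhds : Ioo c d ∈ 𝓝 t := Ioo_mem_nhds ht.1 ht.2
  refine (intervalIntegral.hasDerivAt_integral_of_dominated_loc_of_deriv_le
    (F := fun s x => F x s) (F' := fun s x => F' x s) (bound := fun _ => C) hnhds ?_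
    (hF.uncurry_right t (Ioo_subset_Icc_self ht)).intervalIntegrable
    (((hF'.uncurry_right t (Ioo_subset_Icc_self ht)).mono uIoc_subset_uIcc).aestronglyMeasurable
      measurableSet_uIoc) ?_ intervalIntegrable_const ?_).2
  · filter_upwards [hnhds] with s hs
    exact ((hF.uncurry_right s (Ioo_subset_Icc_self hs)).mono
      uIoc_subset_uIcc).aestronglyMeasurable measurableSet_uIoc
  · exact ae_of_all _ fun x hx s hs => hC (x, s) ⟨uIoc_subset_uIcc hx, Ioo_subset_Icc_self hs⟩
  · exact ae_of_all _ fun x hx s hs => hFF' x (uIoc_subset_uIcc hx) s hs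

theorem hasDerivAt_integral_of_continuousOn_Icc {f : ℝ → ℝ} {x₀ x : ℝ}
    (hf : ContinuousOn f (Icc a b)) (hx₀ : x₀ ∈ Icc a b) (hx : x ∈ Ioo a b) :
    HasDerivAt (fun y => ∫ ξ in x₀..y, f ξ) (f x) x :=
  intervalIntegral.integral_hasDerivAt_right
    (hf.mono (ordConnected_Icc.uIcc_subset hx₀ (Ioo_subset_Icc_self hx))).intervalIntegrable
    ((hf.mono Ioo_subset_Icc_self).stronglyMeasurableAtFilter isOpen_Ioo x hx)
    (hf.continuousAt (Icc_mem_nhds hx.1 hx.2))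

theorem continuousOn_parametric_primitive {g : ℝ → ℝ → ℝ} {x₀ : ℝ}
    (hg : ContinuousOn (uncurry g) (Icc a b ×ˢ Icc c d)) (hx₀ : x₀ ∈ Icc a b) :
    ContinuousOn (fun p : ℝ × ℝ => ∫ ξ in x₀..p.1, g ξ p.2) (Icc a b ×ˢ Icc c d) := by
  rcases lt_or_ge d c with hdc | hcd
  · simp [Icc_eq_empty_of_lt hdc]
  have hab : a ≤ b := hx₀.1.trans hx₀.2
  -- Clamping onto the rectangle extends `g` continuously to the whole plane.
  set π : ℝ × ℝ → ℝ × ℝ := fun p => (projIcc a b hab p.1, projIcc c d hcd p.2)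
  have hπ : Continuous π := by fun_prop
  have hext : Continuous fun p : ℝ × ℝ => ∫ ξ in x₀..p.1, uncurry g (π (ξ, p.2)) :=
    (intervalIntegral.continuous_parametric_primitive_of_continuous (a₀ := x₀)
      (f := fun s ξ => uncurry g (π (ξ, s)))
      (hg.comp_continuous (hπ.comp continuous_swap) fun p =>
        ⟨(projIcc a b hab p.2).2, (projIcc c d hcd p.1).2⟩)).comp continuous_swap
  refine hext.continuousOn.congr fun p hp => intervalIntegral.integral_congr fun ξ hξ => ?_
  have hξ' : ξ ∈ Icc a b := ordConnected_Icc.uIcc_subset hx₀ hp.1 hξ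
  simp [π, projIcc_of_mem hab hξ', projIcc_of_mem hcd hp.2]

theorem hasDerivAt_integral_mul {f f' g g' : ℝ → ℝ → ℝ}
    (hf : ContinuousOn (uncurry f) (uIcc a b ×ˢ Icc c d))
    (hf' : ContinuousOn (uncurry f') (uIcc a b ×ˢ Icc c d))
    (hg : ContinuousOn (uncurry g) (uIcc a b ×ˢ Icc c d))
    (hg' : ContinuousOn (uncurry g') (uIcc a b ×ˢ Icc c d))
    (hff' : ∀ x ∈ uIcc a b, ∀ s ∈ Ioo c d, HasDerivAt (f x ·) (f' x s) s)
    (hgg' : ∀ x ∈ uIcc a b, ∀ s ∈ Ioo c d, HasDerivAt (g x ·) (g' x s) s) (ht : t ∈ Ioo c d) :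
    HasDerivAt (fun s => ∫ x in a..b, f x s * g x s)
      ((∫ x in a..b, f' x t * g x t) + ∫ x in a..b, f x t * g' x t) t := by
  have ht' := Ioo_subset_Icc_self ht
  rw [← intervalIntegral.integral_add (f := fun x => f' x t * g x t)
    (g := fun x => f x t * g' x t)
    ((hf'.uncurry_right t ht').mul (hg.uncurry_right t ht')).intervalIntegrable
    ((hf.uncurry_right t ht').mul (hg'.uncurry_right t ht')).intervalIntegrable]
  exact hasDerivAt_intervalIntegral_of_continuousOn (F := fun x s => f x s * g x s)
    (F' := fun x s => f' x s * g x s + f x s * g' x s) (hf.mul hg)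
    ((hf'.mul hg).add (hf.mul hg')) (fun x hx s hs => (hff' x hx s hs).mul (hgg' x hx s hs)) ht

variable {U : Set (ℝ × ℝ)} {f g : ℝ → ℝ → ℝ}

theorem hasDerivAt_integral_mul_of_contDiffOn (hf : ContDiffOn ℝ 1 (uncurry f) U)
    (hg : ContDiffOn ℝ 1 (uncurry g) U) (hU : IsOpen U) (hK : uIcc a b ×ˢ Icc c d ⊆ U)
    (ht : t ∈ Ioo c d) :
    HasDerivAt (fun s => ∫ x in a..b, f x s * g x s)
      ((∫ x in a..b, pdt f x t * g x t) + ∫ x in a..b, f x t * pdt g x t) t :=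
  hasDerivAt_integral_mul (hf.continuousOn.mono hK)
    ((hf.uncurry_pdt hU (m := 0) le_rfl).continuousOn.mono hK) (hg.continuousOn.mono hK)
    ((hg.uncurry_pdt hU (m := 0) le_rfl).continuousOn.mono hK)
    (fun _ hx _ hs => hf.hasDerivAt_pdt hU one_ne_zero (hK ⟨hx, Ioo_subset_Icc_self hs⟩))
    (fun _ hx _ hs => hg.hasDerivAt_pdt hU one_ne_zero (hK ⟨hx, Ioo_subset_Icc_self hs⟩)) ht

theorem hasDerivAt_integral_sq_of_contDiffOn (hf : ContDiffOn ℝ 1 (uncurry f) U)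
    (hU : IsOpen U) (hK : uIcc a b ×ˢ Icc c d ⊆ U) (ht : t ∈ Ioo c d) :
    HasDerivAt (fun s => ∫ x in a..b, f x s ^ 2) (2 * ∫ x in a..b, f x t * pdt f x t) t := by
  have h := hasDerivAt_integral_mul_of_contDiffOn hf hf hU hK ht
  simp only [← sq, mul_comm (pdt f _ _)] at h
  rwa [← two_mul] at h

end ParametricIntegrals

section IntegrationByParts

variable {U : Set (ℝ × ℝ)} {f g : ℝ → ℝ → ℝ} {a b t : ℝ}

theorem integral_mul_deriv_eq_neg_of_eq_zero {u v u' v' : ℝ → ℝ}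
    (hu : ∀ x ∈ uIcc a b, HasDerivAt u (u' x) x) (hv : ∀ x ∈ uIcc a b, HasDerivAt v (v' x) x)
    (hu' : IntervalIntegrable u' volume a b) (hv' : IntervalIntegrable v' volume a b)
    (ha : u a = 0) (hb : v b = 0) :
    ∫ x in a..b, u x * v' x = -∫ x in a..b, u' x * v x := by
  rw [intervalIntegral.integral_mul_deriv_eq_deriv_mul hu hv hu' hv', ha, hb]
  ring

theorem integral_mul_pdx_eq_neg (hU : IsOpen U) (hf : ContDiffOn ℝ 1 (uncurry f) U)
    (hg : ContDiffOn ℝ 1 (uncurry g) U) (ht : MapsTo (·, t) (uIcc a b) U) (ha : f a t = 0)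
    (hb : g b t = 0) : ∫ x in a..b, f x t * pdx g x t = -∫ x in a..b, pdx f x t * g x t :=
  integral_mul_deriv_eq_neg_of_eq_zero
    (fun _ hx => hf.hasDerivAt_pdx hU one_ne_zero (ht hx))
    (fun _ hx => hg.hasDerivAt_pdx hU one_ne_zero (ht hx))
    ((hf.uncurry_pdx hU (m := 0) le_rfl).continuousOn.uncurry_right_of_mapsTo
      ht).intervalIntegrable
    ((hg.uncurry_pdx hU (m := 0) le_rfl).continuousOn.uncurry_right_of_mapsTo
      ht).intervalIntegrable
    ha hb

theorem integral_mul_pdx_pdx_eq (hU : IsOpen U) (hf : ContDiffOn ℝ 2 (uncurry f) U)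
    (hg : ContDiffOn ℝ 2 (uncurry g) U) (ht : MapsTo (·, t) (uIcc a b) U) (ha : f a t = 0)
    (ha' : pdx f a t = 0) (hb : g b t = 0) (hb' : pdx g b t = 0) :
    ∫ x in a..b, f x t * pdx (pdx g) x t = ∫ x in a..b, pdx (pdx f) x t * g x t := by
  rw [integral_mul_pdx_eq_neg hU (hf.of_le one_le_two) (hg.uncurry_pdx hU (by norm_num)) ht ha
      hb',
    integral_mul_pdx_eq_neg hU (hf.uncurry_pdx hU (by norm_num)) (hg.of_le one_le_two) ht ha' hb,
    neg_neg]

end IntegrationByParts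

section AxialDisplacement

variable {w : ℝ → ℝ → ℝ} {U : Set (ℝ × ℝ)} {a b c d : ℝ}

theorem continuousOn_uF (hw : ContDiffOn ℝ ∞ (uncurry w) U) (hU : IsOpen U)
    (hK : Icc a b ×ˢ Icc c d ⊆ U) (h0 : (0 : ℝ) ∈ Icc a b) :
    ContinuousOn (uncurry (uF w)) (Icc a b ×ˢ Icc c d) :=
  continuousOn_const.mul <| continuousOn_parametric_primitive (g := fun ξ s => pdx w ξ s ^ 2)
    (((hw.uncurry_pdx_infty hU).continuousOn.mono hK).pow 2) h0

theorem continuousOn_utF (hw : ContDiffOn ℝ ∞ (uncurry w) U) (hU : IsOpen U)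
    (hK : Icc a b ×ˢ Icc c d ⊆ U) (h0 : (0 : ℝ) ∈ Icc a b) :
    ContinuousOn (uncurry (utF w)) (Icc a b ×ˢ Icc c d) := by
  have hwx := hw.uncurry_pdx_infty hU
  exact (continuousOn_parametric_primitive (g := fun ξ s => pdx w ξ s * pdt (pdx w) ξ s)
    ((hwx.continuousOn.mono hK).mul ((hwx.uncurry_pdt_infty hU).continuousOn.mono hK)) h0).neg

theorem continuousOn_uttF (hw : ContDiffOn ℝ ∞ (uncurry w) U) (hU : IsOpen U)
    (hK : Icc a b ×ˢ Icc c d ⊆ U) (h0 : (0 : ℝ) ∈ Icc a b) :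
    ContinuousOn (uncurry (uttF w)) (Icc a b ×ˢ Icc c d) := by
  have hwx := hw.uncurry_pdx_infty hU
  have hwxt := hwx.uncurry_pdt_infty hU
  have hg : ContinuousOn
      (uncurry fun ξ s => pdt (pdx w) ξ s ^ 2 + pdx w ξ s * pdt (pdt (pdx w)) ξ s)
      (Icc a b ×ˢ Icc c d) :=
    ((hwxt.continuousOn.mono hK).pow 2).add ((hwx.continuousOn.mono hK).mul
      ((hwxt.uncurry_pdt_infty hU).continuousOn.mono hK))
  exact (continuousOn_parametric_primitive hg h0).neg

theorem hasDerivAt_uF (hw : ContDiffOn ℝ ∞ (uncurry w) U) (hU : IsOpen U)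
    (hK : Icc a b ×ˢ Icc c d ⊆ U) (h0 : (0 : ℝ) ∈ Icc a b) {x s : ℝ} (hx : x ∈ Icc a b)
    (hs : s ∈ Ioo c d) : HasDerivAt (uF w x ·) (utF w x s) s := by
  have hK' : uIcc 0 x ×ˢ Icc c d ⊆ U :=
    (prod_mono (ordConnected_Icc.uIcc_subset h0 hx) subset_rfl).trans hK
  have hwx := hw.uncurry_pdx_infty hU
  have hF : ContinuousOn (uncurry fun ξ s => pdx w ξ s ^ 2) (uIcc 0 x ×ˢ Icc c d) :=
    (hwx.continuousOn.mono hK').pow 2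
  have hF' : ContinuousOn (uncurry fun ξ s => 2 * pdx w ξ s * pdt (pdx w) ξ s)
      (uIcc 0 x ×ˢ Icc c d) :=
    (continuousOn_const.mul (hwx.continuousOn.mono hK')).mul
      ((hwx.uncurry_pdt_infty hU).continuousOn.mono hK')
  refine ((hasDerivAt_intervalIntegral_of_continuousOn hF hF' (fun ξ hξ s hs =>
      ((hwx.hasDerivAt_pdt hU (by simp) (hK' ⟨hξ, Ioo_subset_Icc_self hs⟩)).pow 2).congr_deriv
        (by push_cast; ring)) hs).const_mul (-(1 / 2) : ℝ)).congr_deriv ?_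
  simp only [utF, mul_assoc, intervalIntegral.integral_const_mul]
  ring

theorem hasDerivAt_utF (hw : ContDiffOn ℝ ∞ (uncurry w) U) (hU : IsOpen U)
    (hK : Icc a b ×ˢ Icc c d ⊆ U) (h0 : (0 : ℝ) ∈ Icc a b) {x s : ℝ} (hx : x ∈ Icc a b)
    (hs : s ∈ Ioo c d) : HasDerivAt (utF w x ·) (uttF w x s) s := by
  have hK' : uIcc 0 x ×ˢ Icc c d ⊆ U :=
    (prod_mono (ordConnected_Icc.uIcc_subset h0 hx) subset_rfl).trans hK
  have hwx := hw.uncurry_pdx_infty hU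
  have hwxt := hwx.uncurry_pdt_infty hU
  have hF : ContinuousOn (uncurry fun ξ s => pdx w ξ s * pdt (pdx w) ξ s)
      (uIcc 0 x ×ˢ Icc c d) :=
    (hwx.continuousOn.mono hK').mul (hwxt.continuousOn.mono hK')
  have hF' : ContinuousOn
      (uncurry fun ξ s => pdt (pdx w) ξ s ^ 2 + pdx w ξ s * pdt (pdt (pdx w)) ξ s)
      (uIcc 0 x ×ˢ Icc c d) :=
    ((hwxt.continuousOn.mono hK').pow 2).add ((hwx.continuousOn.mono hK').mul
      ((hwxt.uncurry_pdt_infty hU).continuousOn.mono hK'))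
  refine (hasDerivAt_intervalIntegral_of_continuousOn hF hF' (fun ξ hξ s hs => ?_) hs).neg
  have hq : (ξ, s) ∈ U := hK' ⟨hξ, Ioo_subset_Icc_self hs⟩
  exact ((hwx.hasDerivAt_pdt hU (by simp) hq).mul
    (hwxt.hasDerivAt_pdt hU (by simp) hq)).congr_deriv (by ring)

theorem hasDerivAt_integral_uF_mul_utF {L t : ℝ} (hw : ContDiffOn ℝ ∞ (uncurry w) U)
    (hU : IsOpen U) (hK : Icc 0 L ×ˢ Icc c d ⊆ U) (hL : 0 ≤ L) (ht : t ∈ Ioo c d) :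
    HasDerivAt (fun s => ∫ x in 0..L, uF w x s * utF w x s)
      ((∫ x in 0..L, utF w x t ^ 2) + ∫ x in 0..L, uF w x t * uttF w x t) t := by
  have h0 : (0 : ℝ) ∈ Icc 0 L := left_mem_Icc.2 hL
  have h := hasDerivAt_integral_mul (a := 0) (b := L) (f := uF w) (f' := utF w) (g := utF w)
    (g' := uttF w) ?_ ?_ ?_ ?_ ?_ ?_ ht
  · simpa only [sq] using h
  all_goals rw [uIcc_of_le hL]
  exacts [continuousOn_uF hw hU hK h0, continuousOn_utF hw hU hK h0, continuousOn_utF hw hU hK h0,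
    continuousOn_uttF hw hU hK h0, fun x hx s hs => hasDerivAt_uF hw hU hK h0 hx hs,
    fun x hx s hs => hasDerivAt_utF hw hU hK h0 hx hs]

end AxialDisplacement

section WeakForm

variable {w : ℝ → ℝ → ℝ} {U : Set (ℝ × ℝ)} {L t : ℝ}

theorem integral_mul_pdx4 (hw : ContDiffOn ℝ ∞ (uncurry w) U) (hU : IsOpen U)
    (ht : MapsTo (·, t) (uIcc 0 L) U) (h0 : w 0 t = 0) (h0' : pdx w 0 t = 0)
    (hL : pdx (pdx w) L t = 0) (hL' : pdx (pdx (pdx w)) L t = 0) :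
    ∫ x in 0..L, w x t * pdx (pdx (pdx (pdx w))) x t = ∫ x in 0..L, pdx (pdx w) x t ^ 2 := by
  have hwxx := (hw.uncurry_pdx_infty hU).uncurry_pdx_infty hU
  rw [integral_mul_pdx_pdx_eq hU (hw.of_le ENat.LEInfty.out) (hwxx.of_le ENat.LEInfty.out) ht
    h0 h0' hL hL']
  simp only [sq]

theorem integral_mul_pdx4_pdt (hw : ContDiffOn ℝ ∞ (uncurry w) U) (hU : IsOpen U)
    (ht : MapsTo (·, t) (uIcc 0 L) U) (h0 : w 0 t = 0) (h0' : pdx w 0 t = 0)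
    (hL : ∀ᶠ s in 𝓝 t, pdx (pdx w) L s = 0) (hL' : ∀ᶠ s in 𝓝 t, pdx (pdx (pdx w)) L s = 0) :
    ∫ x in 0..L, w x t * pdx (pdx (pdx (pdx (pdt w)))) x t
      = ∫ x in 0..L, pdx (pdx w) x t * pdt (pdx (pdx w)) x t := by
  have hwx := hw.uncurry_pdx_infty hU
  have hwxx := hwx.uncurry_pdx_infty hU
  have hswap2 : EqOn (uncurry (pdx (pdx (pdt w)))) (uncurry (pdt (pdx (pdx w)))) U :=
    ((eqOn_pdx_pdt hw hU ENat.LEInfty.out).uncurry_pdx hU).trans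
      (eqOn_pdx_pdt hwx hU ENat.LEInfty.out)
  have hswap3 :
      EqOn (uncurry (pdx (pdx (pdx (pdt w))))) (uncurry (pdt (pdx (pdx (pdx w))))) U :=
    (hswap2.uncurry_pdx hU).trans (eqOn_pdx_pdt hwxx hU ENat.LEInfty.out)
  have hLt : (L, t) ∈ U := ht right_mem_uIcc
  have hwtxx := ((hw.uncurry_pdt_infty hU).uncurry_pdx_infty hU).uncurry_pdx_infty hU
  rw [integral_mul_pdx_pdx_eq hU (hw.of_le ENat.LEInfty.out) (hwtxx.of_le ENat.LEInfty.out) ht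
    h0 h0' ((hswap2 hLt).trans (pdt_eq_zero_of_eventually hL))
    ((hswap3 hLt).trans (pdt_eq_zero_of_eventually hL'))]
  exact intervalIntegral.integral_congr fun x hx => congrArg (_ * ·) (hswap2 (ht hx))

theorem integral_mul_pdx_sq_pdx2_mul_pdx (hw : ContDiffOn ℝ ∞ (uncurry w) U) (hU : IsOpen U)
    (ht : MapsTo (·, t) (uIcc 0 L) U) (h0 : w 0 t = 0) (hL : pdx (pdx w) L t = 0) :
    ∫ x in 0..L, w x t * pdx (fun y s => pdx (pdx w) y s ^ 2 * pdx w y s) x t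
      = -∫ x in 0..L, (pdx w x t * pdx (pdx w) x t) ^ 2 := by
  have hwx := hw.uncurry_pdx_infty hU
  have hΦ : ContDiffOn ℝ ∞ (uncurry fun y s => pdx (pdx w) y s ^ 2 * pdx w y s) U :=
    ((hwx.uncurry_pdx_infty hU).pow 2).mul hwx
  rw [integral_mul_pdx_eq_neg hU (hw.of_le ENat.LEInfty.out) (hΦ.of_le ENat.LEInfty.out) ht h0
    (by simp [hL])]
  congr 1
  exact intervalIntegral.integral_congr fun x _ => by ring

theorem integral_mul_pdx2_sq_pdx_mul_pdx2 (hw : ContDiffOn ℝ ∞ (uncurry w) U) (hU : IsOpen U)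
    (ht : MapsTo (·, t) (uIcc 0 L) U) (h0 : w 0 t = 0) (h0' : pdx w 0 t = 0)
    (hL : pdx (pdx w) L t = 0) (hL' : pdx (pdx (pdx w)) L t = 0) :
    ∫ x in 0..L, w x t * pdx (pdx (fun y s => pdx w y s ^ 2 * pdx (pdx w) y s)) x t
      = ∫ x in 0..L, (pdx w x t * pdx (pdx w) x t) ^ 2 := by
  have hwx := hw.uncurry_pdx_infty hU
  have hwxx := hwx.uncurry_pdx_infty hU
  have hΨ : ContDiffOn ℝ ∞ (uncurry fun y s => pdx w y s ^ 2 * pdx (pdx w) y s) U :=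
    (hwx.pow 2).mul hwxx
  have hLt : (L, t) ∈ U := ht right_mem_uIcc
  have hΨ' : pdx (fun y s => pdx w y s ^ 2 * pdx (pdx w) y s) L t = 0 := by
    show deriv (fun y => pdx w y t ^ 2 * pdx (pdx w) y t) L = 0
    rw [(((hwx.hasDerivAt_pdx hU (by simp) hLt).fun_pow 2).fun_mul
      (hwxx.hasDerivAt_pdx hU (by simp) hLt)).deriv, hL, hL']
    ring
  rw [integral_mul_pdx_pdx_eq hU (hw.of_le ENat.LEInfty.out) (hΨ.of_le ENat.LEInfty.out) ht
    h0 h0' (by simp [hL]) hΨ']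
  exact intervalIntegral.integral_congr fun x _ => by ring

theorem continuousOn_uttF_slice {a b : ℝ} (hw : ContDiffOn ℝ ∞ (uncurry w) U) (hU : IsOpen U)
    (hab : MapsTo (·, t) (Icc a b) U) (h0 : (0 : ℝ) ∈ Icc a b) :
    ContinuousOn (uttF w · t) (Icc a b) := by
  have hK : Icc a b ×ˢ Icc t t ⊆ U := by
    rintro ⟨x, s⟩ ⟨hx, hs⟩
    obtain rfl : s = t := le_antisymm hs.2 hs.1
    exact hab hx
  exact (continuousOn_uttF hw hU hK h0).uncurry_right t (left_mem_Icc.2 le_rfl)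

theorem hasDerivAt_integral_uttF {a b x : ℝ} (hw : ContDiffOn ℝ ∞ (uncurry w) U)
    (hU : IsOpen U) (hab : MapsTo (·, t) (Icc a b) U) (h0 : (0 : ℝ) ∈ Icc a b)
    (hL : L ∈ Icc a b) (hx : x ∈ Ioo a b) :
    HasDerivAt (fun y => ∫ ξ in y..L, uttF w ξ t) (-uttF w x t) x := by
  simpa only [← intervalIntegral.integral_symm] using
    (hasDerivAt_integral_of_continuousOn_Icc (continuousOn_uttF_slice hw hU hab h0) hL hx).fun_neg

theorem integral_pdx_sq_mul_integral_uttF {a b : ℝ} (hw : ContDiffOn ℝ ∞ (uncurry w) U)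
    (hU : IsOpen U) (hab : MapsTo (·, t) (Icc a b) U) (hL : uIcc 0 L ⊆ Ioo a b) :
    ∫ x in 0..L, pdx w x t ^ 2 * ∫ ξ in x..L, uttF w ξ t
      = -2 * ∫ x in 0..L, uF w x t * uttF w x t := by
  have h0 : (0 : ℝ) ∈ Icc a b := Ioo_subset_Icc_self (hL left_mem_uIcc)
  have hwx := (hw.uncurry_pdx_infty hU).continuousOn.uncurry_right_of_mapsTo hab
  have hu_parts := integral_mul_deriv_eq_neg_of_eq_zero (u := (uF w · t))
    (v := fun y => ∫ ξ in y..L, uttF w ξ t)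
    (fun x hx => (hasDerivAt_integral_of_continuousOn_Icc (f := fun ξ => pdx w ξ t ^ 2)
      (hwx.pow 2) h0 (hL hx)).const_mul (-(1 / 2) : ℝ))
    (fun x hx => hasDerivAt_integral_uttF hw hU hab h0 (Ioo_subset_Icc_self (hL right_mem_uIcc))
      (hL hx))
    ((continuousOn_const.mul (hwx.pow 2)).mono (hL.trans Ioo_subset_Icc_self)).intervalIntegrable
    ((continuousOn_uttF_slice hw hU hab h0).neg.mono
      (hL.trans Ioo_subset_Icc_self)).intervalIntegrable
    (by simp [uF]) (by simp)
  simp only [mul_neg, mul_assoc, intervalIntegral.integral_neg,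
    intervalIntegral.integral_const_mul] at hu_parts
  linarith

theorem integral_mul_pdx_nonlocal {a b : ℝ} (hw : ContDiffOn ℝ ∞ (uncurry w) U)
    (hU : IsOpen U) (hab : MapsTo (·, t) (Icc a b) U) (hL : uIcc 0 L ⊆ Ioo a b)
    (h0 : w 0 t = 0) :
    ∫ x in 0..L, w x t * pdx (fun y s => pdx w y s * ∫ ξ in y..L, uttF w ξ s) x t
      = 2 * ∫ x in 0..L, uF w x t * uttF w x t := by
  have ha : (0 : ℝ) ∈ Icc a b := Ioo_subset_Icc_self (hL left_mem_uIcc)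
  have hsl : MapsTo (·, t) (uIcc 0 L) U := fun x hx => hab (Ioo_subset_Icc_self (hL hx))
  have hwx := hw.uncurry_pdx_infty hU
  have hwxc := hwx.continuousOn.uncurry_right_of_mapsTo hsl
  have hG (x) (hx : x ∈ uIcc 0 L) := hasDerivAt_integral_uttF hw hU hab ha
    (Ioo_subset_Icc_self (hL right_mem_uIcc)) (hL hx)
  have hΘ : ∀ x ∈ uIcc 0 L, HasDerivAt (fun y => pdx w y t * ∫ ξ in y..L, uttF w ξ t)
      (pdx (pdx w) x t * (∫ ξ in x..L, uttF w ξ t) + pdx w x t * -uttF w x t) x :=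
    fun x hx => (hwx.hasDerivAt_pdx hU (by simp) (hsl hx)).mul (hG x hx)
  have hΘc : ContinuousOn (fun x => pdx (pdx w) x t * (∫ ξ in x..L, uttF w ξ t)
      + pdx w x t * -uttF w x t) (uIcc 0 L) :=
    (((hwx.uncurry_pdx_infty hU).continuousOn.uncurry_right_of_mapsTo hsl).mul
      fun x hx => (hG x hx).continuousAt.continuousWithinAt).add (hwxc.mul
      ((continuousOn_uttF_slice hw hU hab ha).neg.mono (hL.trans Ioo_subset_Icc_self)))
  calc ∫ x in 0..L, w x t * pdx (fun y s => pdx w y s * ∫ ξ in y..L, uttF w ξ s) x t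
      = ∫ x in 0..L, w x t * (pdx (pdx w) x t * (∫ ξ in x..L, uttF w ξ t)
          + pdx w x t * -uttF w x t) :=
        intervalIntegral.integral_congr fun x hx => congrArg (w x t * ·) (hΘ x hx).deriv
    _ = -∫ x in 0..L, pdx w x t * (pdx w x t * ∫ ξ in x..L, uttF w ξ t) :=
        integral_mul_deriv_eq_neg_of_eq_zero (fun x hx => hw.hasDerivAt_pdx hU (by simp) (hsl hx))
          hΘ hwxc.intervalIntegrable hΘc.intervalIntegrable h0 (by simp)
    _ = -∫ x in 0..L, pdx w x t ^ 2 * ∫ ξ in x..L, uttF w ξ t := by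
        congr 1
        exact intervalIntegral.integral_congr fun x _ => by ring
    _ = 2 * ∫ x in 0..L, uF w x t * uttF w x t := by
        rw [integral_pdx_sq_mul_integral_uttF hw hU hab hL]
        ring

theorem integral_mul_pde {D k2 : ℝ} (hw : ContDiffOn ℝ ∞ (uncurry w) U) (hU : IsOpen U)
    (ht : MapsTo (·, t) (uIcc 0 L) U)
    (hpde : ∀ x ∈ uIcc 0 L, pdt (pdt w) x t + D * pdx (pdx (pdx (pdx w))) x t
        + k2 * pdx (pdx (pdx (pdx (pdt w)))) x t
        - D * pdx (fun y s => (pdx (pdx w) y s) ^ 2 * pdx w y s) x t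
        + D * pdx (pdx (fun y s => (pdx w y s) ^ 2 * pdx (pdx w) y s)) x t
        + pdx (fun y s => pdx w y s * ∫ ξ in y..L, uttF w ξ s) x t = 0) :
    (∫ x in 0..L, w x t * pdt (pdt w) x t)
      + D * (∫ x in 0..L, w x t * pdx (pdx (pdx (pdx w))) x t)
      + k2 * (∫ x in 0..L, w x t * pdx (pdx (pdx (pdx (pdt w)))) x t)
      - D * (∫ x in 0..L, w x t * pdx (fun y s => (pdx (pdx w) y s) ^ 2 * pdx w y s) x t)
      + D * (∫ x in 0..L,
          w x t * pdx (pdx (fun y s => (pdx w y s) ^ 2 * pdx (pdx w) y s)) x t)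
      + (∫ x in 0..L, w x t * pdx (fun y s => pdx w y s * ∫ ξ in y..L, uttF w ξ s) x t)
      = 0 := by
  have slice {g : ℝ → ℝ → ℝ} (hg : ContDiffOn ℝ ∞ (uncurry g) U) :
      ContinuousOn (g · t) (uIcc 0 L) :=
    hg.continuousOn.uncurry_right_of_mapsTo ht
  have hwx := hw.uncurry_pdx_infty hU
  have hwxx := hwx.uncurry_pdx_infty hU
  have hΦ : ContDiffOn ℝ ∞ (uncurry fun y s => pdx (pdx w) y s ^ 2 * pdx w y s) U :=
    (hwxx.pow 2).mul hwx
  have hΨ : ContDiffOn ℝ ∞ (uncurry fun y s => pdx w y s ^ 2 * pdx (pdx w) y s) U :=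
    (hwx.pow 2).mul hwxx
  have c_w := slice hw
  have c_wtt := slice ((hw.uncurry_pdt_infty hU).uncurry_pdt_infty hU)
  have c_wxxxx := slice ((hwxx.uncurry_pdx_infty hU).uncurry_pdx_infty hU)
  have c_wtxxxx := slice ((((hw.uncurry_pdt_infty hU).uncurry_pdx_infty hU).uncurry_pdx_infty
    hU).uncurry_pdx_infty hU |>.uncurry_pdx_infty hU)
  have c_Φx := slice (hΦ.uncurry_pdx_infty hU)
  have c_Ψxx := slice ((hΨ.uncurry_pdx_infty hU).uncurry_pdx_infty hU)
  -- The nonlocal term is the only one not known to be integrable a priori; the equation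
  -- expresses it through the other five.
  have hΘ : ∫ x in 0..L, w x t * pdx (fun y s => pdx w y s * ∫ ξ in y..L, uttF w ξ s) x t
      = -∫ x in 0..L, (w x t * pdt (pdt w) x t + D * (w x t * pdx (pdx (pdx (pdx w))) x t)
        + k2 * (w x t * pdx (pdx (pdx (pdx (pdt w)))) x t)
        - D * (w x t * pdx (fun y s => (pdx (pdx w) y s) ^ 2 * pdx w y s) x t)
        + D * (w x t * pdx (pdx (fun y s => (pdx w y s) ^ 2 * pdx (pdx w) y s)) x t)) := by
    rw [← intervalIntegral.integral_neg]
    exact intervalIntegral.integral_congr fun x hx => by linear_combination w x t * hpde x hx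
  rw [hΘ, intervalIntegral.integral_add, intervalIntegral.integral_sub,
    intervalIntegral.integral_add, intervalIntegral.integral_add,
    intervalIntegral.integral_const_mul, intervalIntegral.integral_const_mul,
    intervalIntegral.integral_const_mul, intervalIntegral.integral_const_mul]
  · ring
  all_goals exact ContinuousOn.intervalIntegrable (by fun_prop)

end WeakForm

theorem full_equipartition_identity_general
    (L D k2 T : ℝ) (hL : 0 < L)
    (w : ℝ → ℝ → ℝ) (hw : IsFullSol L D k2 T (fun _ _ => 0) w) :
    ∀ t ∈ Ioo (0:ℝ) T,
      deriv (fun s =>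
          (∫ x in (0:ℝ)..L, w x s * pdt w x s)
            + (k2/2) * (∫ x in (0:ℝ)..L, (pdx (pdx w) x s) ^ 2)
            + 2 * (∫ x in (0:ℝ)..L, uF w x s * utF w x s)) t
        = (∫ x in (0:ℝ)..L, (pdt w x t) ^ 2)
          + 2 * (∫ x in (0:ℝ)..L, (utF w x t) ^ 2)
          - D * (∫ x in (0:ℝ)..L, (pdx (pdx w) x t) ^ 2)
          - 2 * D * (∫ x in (0:ℝ)..L, (pdx w x t * pdx (pdx w) x t) ^ 2) := by
  intro t ht
  obtain ⟨⟨U, hU, hKU, hw⟩, hpde, hbc⟩ := hw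
  have ht' : t ∈ Icc 0 T := Ioo_subset_Icc_self ht
  have hK : uIcc 0 L ×ˢ Icc 0 T ⊆ U := by rwa [uIcc_of_le hL.le]
  have hsl : MapsTo (·, t) (uIcc 0 L) U := fun x hx => hK ⟨hx, ht'⟩
  obtain ⟨a, b, ha, hb, hab⟩ := (hU.preimage (continuous_id.prodMk continuous_const) :
    IsOpen {x | (x, t) ∈ U}).exists_Icc_subset_of_Icc_subset hL.le fun x hx => hKU ⟨hx, ht'⟩
  obtain ⟨h0, h0', hLxx, hLxxx⟩ := hbc t ht'
  have hbc_near : ∀ᶠ s in 𝓝 t, _ := Filter.mem_of_superset (Icc_mem_nhds ht.1 ht.2) hbc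
  have hA := hasDerivAt_integral_mul_of_contDiffOn (hw.of_le ENat.LEInfty.out)
    ((hw.uncurry_pdt_infty hU).of_le ENat.LEInfty.out) hU hK ht
  have hB := hasDerivAt_integral_sq_of_contDiffOn
    (((hw.uncurry_pdx_infty hU).uncurry_pdx_infty hU).of_le ENat.LEInfty.out) hU hK ht
  have hC := hasDerivAt_integral_uF_mul_utF hw hU hKU hL.le ht
  refine ((hA.add (hB.const_mul (k2 / 2))).add (hC.const_mul 2)).deriv.trans ?_
  have hweak := integral_mul_pde hw hU hsl fun x hx => by
    simpa using hpde x (uIcc_of_le hL.le ▸ hx) t ht'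
  rw [integral_mul_pdx4 hw hU hsl h0 h0' hLxx hLxxx,
    integral_mul_pdx4_pdt hw hU hsl h0 h0' (hbc_near.mono fun _ h => h.2.2.1)
      (hbc_near.mono fun _ h => h.2.2.2),
    integral_mul_pdx_sq_pdx2_mul_pdx hw hU hsl h0 hLxx,
    integral_mul_pdx2_sq_pdx_mul_pdx2 hw hU hsl h0 h0' hLxx hLxxx,
    integral_mul_pdx_nonlocal hw hU hab (by rw [uIcc_of_le hL.le]; exact Icc_subset_Ioo ha hb)
      h0] at hweak
  simp only [← sq]
  linear_combination hweak

/-- Exact equipartition (stability multiplier) identity, obtained by multiplying the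
unforced damped equation by `w`; this underlies estimate (6.7) of the paper. -/
theorem full_equipartition_identity
    (L D k2 T : ℝ) (hL : 0 < L) (hD : 0 < D) (hk2 : 0 < k2) (hT : 0 < T)
    (w : ℝ → ℝ → ℝ) (hw : IsFullSol L D k2 T (fun _ _ => 0) w) :
    ∀ t ∈ Ioo (0:ℝ) T,
      deriv (fun s =>
          (∫ x in (0:ℝ)..L, w x s * pdt w x s)
            + (k2/2) * (∫ x in (0:ℝ)..L, (pdx (pdx w) x s) ^ 2)
            + 2 * (∫ x in (0:ℝ)..L, uF w x s * utF w x s)) t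
        = (∫ x in (0:ℝ)..L, (pdt w x t) ^ 2)
          + 2 * (∫ x in (0:ℝ)..L, (utF w x t) ^ 2)
          - D * (∫ x in (0:ℝ)..L, (pdx (pdx w) x t) ^ 2)
          - 2 * D * (∫ x in (0:ℝ)..L, (pdx w x t * pdx (pdx w) x t) ^ 2) :=
  full_equipartition_identity_general L D k2 T hL w hw
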